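/- Let the extended-market GOP linear system be $\tilde M_t(\pi^{**,0}_t, \pi^{**}_t, \lambda^{**}_t)^\top = (0, a_t, 1)^\top$ where $\tilde M_t = \begin{pmatrix} 0 & \mathbf{0}^\top & 1 \\ \mathbf{0} & b_t b_t^\top & \mathbf{1} \\ 1 & \mathbf{1}^\top & 0 \end{pmatrix}$ with $b_t$ invertible and $a_t = \lambda^*_t\mathbf{1} + b_t\sigma^*_t$. Then the solution satisfies $\lambda^{**}_t = 0$ and $\sigma^{**}_t := b_t^\top\pi^{**}_t = \lambda^*_t b_t^{-1}\mathbf{1} + \sigma^*_t$. -/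
import Mathlib


open Matrix

/-- The extended-market GOP linear system
`M̃ (π**,0, π**, λ**)ᵀ = (0, a, 1)ᵀ` with `M̃ = [[0, 0ᵀ, 1], [0, b bᵀ, 𝟙], [1, 𝟙ᵀ, 0]]`
(written out row-blockwise as equations) and `a = λ* 𝟙 + b σ*`. Any solution satisfies
`λ** = 0` and `σ** := bᵀ π** = λ* b⁻¹ 𝟙 + σ*`. -/
theorem extended_GOP_linear_system
    {n : ℕ} (b : Matrix (Fin n) (Fin n) ℝ) (hb : IsUnit b)
    (lam : ℝ) (σs : Fin n → ℝ)
    (a : Fin n → ℝ) (ha : a = (fun _ => lam) + b *ᵥ σs)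
    (π0 : ℝ) (π : Fin n → ℝ) (lss : ℝ)
    -- first block row: `0·π0 + 0ᵀ π + 1·λ** = 0`
    (hrow1 : 0 * π0 + lss = 0)
    -- middle block rows: `0·π0 + (b bᵀ) π + λ** 𝟙 = a`
    (hrow2 : ∀ i, ((b * bᵀ) *ᵥ π) i + lss = a i)
    -- last block row: `1·π0 + 𝟙ᵀ π + 0·λ** = 1`
    (hrow3 : π0 + ∑ i, π i = 1) :
    lss = 0 ∧ bᵀ *ᵥ π = lam • (b⁻¹ *ᵥ fun _ => (1 : ℝ)) + σs := by
  have hl : lss = 0 := by linarith [hrow1]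
  refine ⟨hl, ?_⟩
  have h2 : (b * bᵀ) *ᵥ π = a := by
    funext i; have := hrow2 i; rw [hl] at this; linarith
  have hbinv : b⁻¹ * b = 1 := nonsing_inv_mul b (isUnit_iff_isUnit_det b |>.mp hb)
  have key : b⁻¹ *ᵥ ((b * bᵀ) *ᵥ π) = b⁻¹ *ᵥ a := by rw [h2]
  rw [mulVec_mulVec, ← Matrix.mul_assoc, hbinv, Matrix.one_mul] at key
  rw [key, ha, mulVec_add]
  congr 1
  · funext i
    simp [mulVec, dotProduct, Finset.mul_sum, mul_comm]
  · rw [mulVec_mulVec, hbinv, one_mulVec]
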